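/- If P is directionally atomless, then F⁺ and F⁻ are continuous functions on ℝⁿ. -/

import Mathlib

open MeasureTheory

/-- The function `F⁺` from the paper, written with expectations as Bochner integrals.
Here `K'(E[PP'] − E[P]E[P'])K = E[⟪P,K⟫²] − (E[⟪P,K⟫])²` and `E[P']K = E[⟪P,K⟫]`. -/
noncomputable def Fplus {Ω : Type*} [MeasurableSpace Ω] (ℙ : Measure Ω) {n : ℕ}
    (P : Ω → EuclideanSpace ℝ (Fin n)) (s ρ' γp ap am bp bm : ℝ)
    (K : EuclideanSpace ℝ (Fin n)) : ℝ :=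
  let pk : Ω → ℝ := fun ω => inner ℝ (P ω) K
  let A : ℝ :=
    (∫ ω, ap * (s + pk ω) * (if 0 ≤ s + pk ω then (1:ℝ) else 0) ∂ℙ) +
    (∫ ω, am * (s + pk ω) * (if s + pk ω < 0 then (1:ℝ) else 0) ∂ℙ)
  ρ' ^ 2 * ((∫ ω, (pk ω) ^ 2 ∂ℙ) - (∫ ω, pk ω ∂ℙ) ^ 2) +
  (∫ ω, (2 * ρ' * ap + bp) * (s + pk ω) ^ 2 * (if 0 ≤ s + pk ω then (1:ℝ) else 0) ∂ℙ) +
  (∫ ω, (2 * ρ' * am + bm) * (s + pk ω) ^ 2 * (if s + pk ω < 0 then (1:ℝ) else 0) ∂ℙ) -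
  A ^ 2 - 2 * ρ' * A * (s + ∫ ω, pk ω ∂ℙ) - γp * A -
  ρ' * γp * (s + ∫ ω, pk ω ∂ℙ)

/-- The function `F⁻` from the paper, written with expectations as Bochner integrals. -/
noncomputable def Fminus {Ω : Type*} [MeasurableSpace Ω] (ℙ : Measure Ω) {n : ℕ}
    (P : Ω → EuclideanSpace ℝ (Fin n)) (s ρ' γm ap am bp bm : ℝ)
    (K : EuclideanSpace ℝ (Fin n)) : ℝ :=
  let pk : Ω → ℝ := fun ω => inner ℝ (P ω) K
  let A : ℝ :=
    (∫ ω, ap * (s + pk ω) * (if s + pk ω ≤ 0 then (1:ℝ) else 0) ∂ℙ) +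
    (∫ ω, am * (s + pk ω) * (if 0 < s + pk ω then (1:ℝ) else 0) ∂ℙ)
  ρ' ^ 2 * ((∫ ω, (pk ω) ^ 2 ∂ℙ) - (∫ ω, pk ω ∂ℙ) ^ 2) +
  (∫ ω, (2 * ρ' * ap + bp) * (s + pk ω) ^ 2 * (if s + pk ω ≤ 0 then (1:ℝ) else 0) ∂ℙ) +
  (∫ ω, (2 * ρ' * am + bm) * (s + pk ω) ^ 2 * (if 0 < s + pk ω then (1:ℝ) else 0) ∂ℙ) -
  A ^ 2 - 2 * ρ' * A * (s + ∫ ω, pk ω ∂ℙ) + γm * A +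
  ρ' * γm * (s + ∫ ω, pk ω ∂ℙ)

/-!
Every ingredient of `F⁺` and `F⁻` is an integral `∫ h (s + ⟪P, K⟫) dℙ` where `h` grows at most
quadratically and is continuous off `0` (the indicators jump only there). On `‖K‖ ≤ R` the
integrand is dominated by `C (1 + 2s² + 2R²‖P‖²)`, integrable because `E‖P‖² < ∞`, so dominated
convergence gives continuity at `K₀` as soon as `K ↦ h (s + ⟪P ω, K⟫)` is continuous at `K₀` for
almost every `ω`. For `K₀ ≠ 0` the exceptional set `{⟪P, K₀⟫ = -s}` is null because `P` is
directionally atomless; at `K₀ = 0` the argument is `s ≠ 0`.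
-/

open Filter
open scoped RealInnerProductSpace

lemma continuousAt_ite_one_zero {α : Type*} [TopologicalSpace α] {p : α → Prop}
    [DecidablePred p] {x : α} (hx : x ∉ frontier {y | p y}) :
    ContinuousAt (fun y => if p y then (1 : ℝ) else 0) x := by
  convert continuousOn_const.continuousAt_indicator (f := fun _ : α => (1 : ℝ)) hx using 1
  ext y
  simp [Set.indicator_apply]

lemma abs_le_one_add_sq (x : ℝ) : |x| ≤ 1 + x ^ 2 := by
  nlinarith [sq_abs x, sq_nonneg (|x| - 1)]

lemma abs_mul_le_mul_one_add_sq (c x : ℝ) : |c * x| ≤ |c| * (1 + x ^ 2) := by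
  rw [abs_mul]
  exact mul_le_mul_of_nonneg_left (abs_le_one_add_sq x) (abs_nonneg c)

lemma abs_mul_sq_le_mul_one_add_sq (c x : ℝ) : |c * x ^ 2| ≤ |c| * (1 + x ^ 2) := by
  rw [abs_mul, abs_of_nonneg (sq_nonneg x)]
  exact mul_le_mul_of_nonneg_left (by linarith) (abs_nonneg c)

section IntegralAlongDirections

variable {Ω E : Type*} [MeasurableSpace Ω] {μ : Measure Ω}
  [NormedAddCommGroup E] [InnerProductSpace ℝ E] {P : Ω → E} {s : ℝ} {h : ℝ → ℝ}

def DirectionallyAtomless (μ : Measure Ω) (P : Ω → E) : Prop :=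
  ∀ L : E, L ≠ 0 → ∀ c : ℝ, μ {ω | ⟪P ω, L⟫ = c} = 0

lemma sq_add_inner_le (s : ℝ) (p K : E) :
    (s + ⟪p, K⟫) ^ 2 ≤ 2 * s ^ 2 + 2 * ‖K‖ ^ 2 * ‖p‖ ^ 2 := by
  have hinner : ⟪p, K⟫ ^ 2 ≤ (‖p‖ * ‖K‖) ^ 2 := by
    rw [← sq_abs]
    exact pow_le_pow_left₀ (abs_nonneg _) (abs_real_inner_le_norm p K) 2
  nlinarith [sq_nonneg (s - ⟪p, K⟫)]

lemma ae_continuousAt_comp_add_inner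
    (hatom : DirectionallyAtomless μ P)
    (hs : s ≠ 0) (hcont : ∀ x ≠ 0, ContinuousAt h x) (K₀ : E) :
    ∀ᵐ ω ∂μ, ContinuousAt (fun K => h (s + ⟪P ω, K⟫)) K₀ := by
  have hne : ∀ᵐ ω ∂μ, s + ⟪P ω, K₀⟫ ≠ 0 := by
    by_cases hK₀ : K₀ = 0
    · simp [hK₀, hs]
    · rw [ae_iff]
      convert hatom K₀ hK₀ (-s) using 2
      ext ω
      simp [add_eq_zero_iff_eq_neg']
  filter_upwards [hne] with ω hω
  exact (hcont _ hω).comp (f := fun K => s + ⟪P ω, K⟫) (by fun_prop)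

lemma continuous_integral_comp_add_inner_of_ae_continuousAt [IsFiniteMeasure μ]
    (hP : AEStronglyMeasurable P μ) (hP2 : Integrable (fun ω => ‖P ω‖ ^ 2) μ)
    (hh : Measurable h) {C : ℝ} (hgrowth : ∀ x, |h x| ≤ C * (1 + x ^ 2))
    (hcont : ∀ K₀, ∀ᵐ ω ∂μ, ContinuousAt (fun K => h (s + ⟪P ω, K⟫)) K₀) :
    Continuous fun K => ∫ ω, h (s + ⟪P ω, K⟫) ∂μ := by
  have hC : 0 ≤ C := by simpa using (abs_nonneg _).trans (hgrowth 0)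
  refine continuous_iff_continuousAt.2 fun K₀ => ?_
  set R := ‖K₀‖ + 1
  refine continuousAt_of_dominated
    (bound := fun ω => C * (1 + 2 * s ^ 2) + 2 * C * R ^ 2 * ‖P ω‖ ^ 2) ?_ ?_
    ((integrable_const _).add (hP2.const_mul _))
    (hcont K₀)
  · refine Eventually.of_forall fun K => ?_
    exact (hh.comp_aemeasurable (aemeasurable_const.add
      (hP.inner aestronglyMeasurable_const).aemeasurable)).aestronglyMeasurable
  · filter_upwards [Metric.ball_mem_nhds K₀ one_pos] with K hK
    refine Eventually.of_forall fun ω => ?_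
    have hKR : ‖K‖ ^ 2 ≤ R ^ 2 := by
      have := norm_le_norm_add_norm_sub' K K₀
      rw [mem_ball_iff_norm] at hK
      exact pow_le_pow_left₀ (norm_nonneg _) (by linarith) 2
    calc ‖h (s + ⟪P ω, K⟫)‖ ≤ C * (1 + (s + ⟪P ω, K⟫) ^ 2) := hgrowth _
      _ ≤ C * (1 + (2 * s ^ 2 + 2 * R ^ 2 * ‖P ω‖ ^ 2)) := by
        gcongr
        exact (sq_add_inner_le s (P ω) K).trans (by gcongr)
      _ = _ := by ring

lemma continuous_integral_comp_add_inner [IsFiniteMeasure μ]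
    (hP : AEStronglyMeasurable P μ) (hP2 : Integrable (fun ω => ‖P ω‖ ^ 2) μ)
    (hatom : DirectionallyAtomless μ P) (hs : s ≠ 0) (hh : Measurable h)
    (hcont : ∀ x ≠ 0, ContinuousAt h x) {C : ℝ} (hgrowth : ∀ x, |h x| ≤ C * (1 + x ^ 2)) :
    Continuous fun K => ∫ ω, h (s + ⟪P ω, K⟫) ∂μ :=
  continuous_integral_comp_add_inner_of_ae_continuousAt hP hP2 hh hgrowth
    (ae_continuousAt_comp_add_inner hatom hs hcont)

lemma continuous_integral_inner [IsFiniteMeasure μ] (hP : AEStronglyMeasurable P μ)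
    (hP2 : Integrable (fun ω => ‖P ω‖ ^ 2) μ) :
    Continuous fun K => ∫ ω, ⟪P ω, K⟫ ∂μ := by
  simpa using continuous_integral_comp_add_inner_of_ae_continuousAt (s := 0) (h := id) (C := 1)
    hP hP2 measurable_id (fun x => by simpa using abs_le_one_add_sq x)
    fun _ => Eventually.of_forall fun _ => by fun_prop

lemma continuous_integral_inner_sq [IsFiniteMeasure μ] (hP : AEStronglyMeasurable P μ)
    (hP2 : Integrable (fun ω => ‖P ω‖ ^ 2) μ) :
    Continuous fun K => ∫ ω, ⟪P ω, K⟫ ^ 2 ∂μ := by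
  simpa using continuous_integral_comp_add_inner_of_ae_continuousAt (s := 0)
    (h := fun x => x ^ 2) (C := 1) hP hP2 (by fun_prop)
    (fun x => by rw [abs_of_nonneg (sq_nonneg x)]; linarith)
    fun _ => Eventually.of_forall fun _ => by fun_prop

lemma continuous_integral_mul_ite_comp_add_inner [IsFiniteMeasure μ]
    (hP : AEStronglyMeasurable P μ) (hP2 : Integrable (fun ω => ‖P ω‖ ^ 2) μ)
    (hatom : DirectionallyAtomless μ P) (hs : s ≠ 0)
    {g : ℝ → ℝ} (hg : Continuous g) {C : ℝ} (hgrowth : ∀ x, |g x| ≤ C * (1 + x ^ 2))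
    {p : ℝ → Prop} [DecidablePred p] (hpm : MeasurableSet {x | p x})
    (hpf : frontier {x | p x} ⊆ {0}) :
    Continuous fun K =>
      ∫ ω, g (s + ⟪P ω, K⟫) * (if p (s + ⟪P ω, K⟫) then 1 else 0) ∂μ := by
  refine continuous_integral_comp_add_inner (h := fun x => g x * if p x then 1 else 0) (C := C)
    hP hP2 hatom hs (hg.measurable.mul (Measurable.ite hpm measurable_const measurable_const))
    (fun x hx => hg.continuousAt.mul (continuousAt_ite_one_zero fun hfr => hx (hpf hfr)))
    fun x => ?_
  rw [abs_mul]
  calc |g x| * |if p x then (1 : ℝ) else 0| ≤ |g x| * 1 := by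
        gcongr
        split_ifs <;> simp
    _ ≤ C * (1 + x ^ 2) := by simpa using hgrowth x

end IntegralAlongDirections

theorem Fplus_Fminus_continuous_general {Ω : Type*} [MeasurableSpace Ω] (ℙ : Measure Ω)
    [IsProbabilityMeasure ℙ] {n : ℕ}
    (P : Ω → EuclideanSpace ℝ (Fin n)) (hmeas : Measurable P)
    (hL2 : Integrable (fun ω => ‖P ω‖ ^ 2) ℙ)
    (s ρ' γp γm ap am bp bm : ℝ) (hs : 0 < s)
    (hatomless : ∀ L : EuclideanSpace ℝ (Fin n), L ≠ 0 →
      ∀ c : ℝ, ℙ {ω | (inner ℝ (P ω) L : ℝ) = c} = 0) :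
    Continuous (Fplus ℙ P s ρ' γp ap am bp bm) ∧
    Continuous (Fminus ℙ P s ρ' γm ap am bp bm) := by
  have hP : AEStronglyMeasurable P ℙ := hmeas.aestronglyMeasurable
  have := continuous_integral_inner hP hL2
  have := continuous_integral_inner_sq hP hL2
  have hlin (c : ℝ) (p : ℝ → Prop) [DecidablePred p] (hpm : MeasurableSet {x | p x})
      (hpf : frontier {x | p x} ⊆ {0}) :
      Continuous fun K => ∫ ω, c * (s + ⟪P ω, K⟫) * (if p (s + ⟪P ω, K⟫) then 1 else 0) ∂ℙ :=
    continuous_integral_mul_ite_comp_add_inner (g := fun x => c * x) hP hL2 hatomless hs.ne'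
      (by fun_prop) (abs_mul_le_mul_one_add_sq c) hpm hpf
  have hquad (c : ℝ) (p : ℝ → Prop) [DecidablePred p] (hpm : MeasurableSet {x | p x})
      (hpf : frontier {x | p x} ⊆ {0}) :
      Continuous fun K => ∫ ω, c * (s + ⟪P ω, K⟫) ^ 2 * (if p (s + ⟪P ω, K⟫) then 1 else 0) ∂ℙ :=
    continuous_integral_mul_ite_comp_add_inner (g := fun x => c * x ^ 2) hP hL2 hatomless hs.ne'
      (by fun_prop) (abs_mul_sq_le_mul_one_add_sq c) hpm hpf
  have := hlin ap (0 ≤ ·) measurableSet_Ici frontier_Ici.subset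
  have := hlin am (· < 0) measurableSet_Iio frontier_Iio.subset
  have := hlin ap (· ≤ 0) measurableSet_Iic frontier_Iic.subset
  have := hlin am (0 < ·) measurableSet_Ioi frontier_Ioi.subset
  have := hquad (2 * ρ' * ap + bp) (0 ≤ ·) measurableSet_Ici frontier_Ici.subset
  have := hquad (2 * ρ' * am + bm) (· < 0) measurableSet_Iio frontier_Iio.subset
  have := hquad (2 * ρ' * ap + bp) (· ≤ 0) measurableSet_Iic frontier_Iic.subset
  have := hquad (2 * ρ' * am + bm) (0 < ·) measurableSet_Ioi frontier_Ioi.subset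
  exact ⟨by unfold Fplus; dsimp only; fun_prop, by unfold Fminus; dsimp only; fun_prop⟩

/-- If `P` is directionally atomless (and square integrable), then `F⁺` and `F⁻`
are continuous functions on `ℝⁿ`. -/
theorem Fplus_Fminus_continuous {Ω : Type*} [MeasurableSpace Ω] (ℙ : Measure Ω)
    [IsProbabilityMeasure ℙ] {n : ℕ} (hn : 1 ≤ n)
    (P : Ω → EuclideanSpace ℝ (Fin n)) (hmeas : Measurable P)
    (hL2 : Integrable (fun ω => ‖P ω‖ ^ 2) ℙ)
    (s ρ' γp γm ap am bp bm : ℝ) (hs : 0 < s) (hρ : 0 < ρ')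
    (hatomless : ∀ L : EuclideanSpace ℝ (Fin n), L ≠ 0 →
      ∀ c : ℝ, ℙ {ω | (inner ℝ (P ω) L : ℝ) = c} = 0) :
    Continuous (Fplus ℙ P s ρ' γp ap am bp bm) ∧
    Continuous (Fminus ℙ P s ρ' γm ap am bp bm) :=
  Fplus_Fminus_continuous_general ℙ P hmeas hL2 s ρ' γp γm ap am bp bm hs hatomless
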